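/- Let d ≥ 2 be an integer. Then lim_{r→∞} r^{d−1}·W^(d)(r) = 2/(Γ(d)·π·vol(S^{d−1})). -/

import Mathlib

/-!
Since `arcsin y ~ y` as `y → 0`, `U x * x → 1 / π`, and Jordan's inequality gives
`0 ≤ U x * x ≤ 1 / 2`. Multiplied by `r`, the integral in `U^(d)(r)` becomes
`∫_1^∞ (U (t r) t r) t^(-d) dt`, which is bounded by `1 / (2 (d - 1))` and tends to
`1 / (π (d - 1))` by dominated convergence. Hence `U^(d)(r) r` is bounded on `(0, ∞)` and tends to
`1 / π - (d - 2) / (π (d - 1)) = 1 / (π (d - 1))`. Finally `r^(d-1) W^(d)(r)` is a constant times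
the Cesàro mean `r⁻¹ ∫_0^r U^(d)(t) t dt`, which has the same limit, and `Γ(d) = (d - 1) Γ(d - 1)`.
-/

open MeasureTheory Filter

/-- The limiting profile `U`. -/
noncomputable def U (r : ℝ) : ℝ :=
  if r ≤ 1 then 1 / 2 else 1 / 2 - Real.arccos (1 / r) / Real.pi

/-- The `d`-dimensional profile `U^(d)`. -/
noncomputable def Ud (d : ℕ) (r : ℝ) : ℝ :=
  U r - ((d : ℝ) - 2) * ∫ t in Set.Ioi (1:ℝ), U (t * r) * t ^ ((1:ℝ) - d)

/-- The volume of the unit sphere `S^{d-1}` in `ℝ^d`. -/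
noncomputable def volSphere (d : ℕ) : ℝ :=
  2 * Real.pi ^ ((d : ℝ) / 2) / Real.Gamma ((d : ℝ) / 2)

/-- The `d`-dimensional Shannon density profile `W^(d)`. -/
noncomputable def Wd (d : ℕ) (r : ℝ) : ℝ :=
  (2 / (Real.Gamma ((d : ℝ) - 1) * volSphere d)) * r ^ (-(d : ℝ)) *
    ∫ t in (0:ℝ)..r, Ud d t * t

open Real Set Asymptotics Topology

lemma measurable_U : Measurable U :=
  Measurable.ite (measurableSet_le measurable_id measurable_const) measurable_const
    (measurable_const.sub ((continuous_arccos.measurable.comp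
      (measurable_const.div measurable_id)).div_const _))

lemma U_eq_arcsin_div_pi {x : ℝ} (hx : 1 ≤ x) : U x = arcsin (1 / x) / π := by
  rcases hx.eq_or_lt with rfl | h
  · simp [U]
    field_simp
  · rw [U, if_neg h.not_ge, arccos_eq_pi_div_two_sub_arcsin]
    field_simp
    ring

lemma U_nonneg (x : ℝ) : 0 ≤ U x := by
  rcases le_or_gt x 1 with h | h
  · simp [U, h]
  · rw [U_eq_arcsin_div_pi h.le]
    exact div_nonneg (arcsin_nonneg.2 (by positivity)) pi_pos.le

lemma arcsin_le_pi_div_two_mul {y : ℝ} (hy₀ : 0 ≤ y) (hy₁ : y ≤ 1) : arcsin y ≤ π / 2 * y := by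
  have h := mul_le_sin (arcsin_nonneg.2 hy₀) (arcsin_le_pi_div_two y)
  rw [sin_arcsin (by linarith) hy₁] at h
  have hπ := pi_pos
  calc arcsin y = π / 2 * (2 / π * arcsin y) := by field_simp
    _ ≤ π / 2 * y := by gcongr

lemma U_mul_self_le (x : ℝ) : U x * x ≤ 1 / 2 := by
  rcases le_or_gt x 1 with h | h
  · rw [U, if_pos h]; linarith
  · have hx₀ : 0 < x := by linarith
    have hπ := pi_pos
    have := arcsin_le_pi_div_two_mul (y := 1 / x) (by positivity)
      ((div_le_one hx₀).2 h.le)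
    rw [U_eq_arcsin_div_pi h.le, div_mul_eq_mul_div, div_le_iff₀ hπ]
    calc arcsin (1 / x) * x ≤ π / 2 * (1 / x) * x := by gcongr
      _ = 1 / 2 * π := by field_simp

lemma abs_U_mul_self_le {x : ℝ} (hx : 0 ≤ x) : |U x * x| ≤ 1 / 2 := by
  rw [abs_of_nonneg (mul_nonneg (U_nonneg x) hx)]
  exact U_mul_self_le x

-- `arcsin y / y → arcsin' 0 = 1` as `y = 1 / x → 0⁺`.
lemma tendsto_U_mul_self_atTop : Tendsto (fun x => U x * x) atTop (𝓝 (1 / π)) := by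
  have hslope : Tendsto (fun y => y⁻¹ • (arcsin (0 + y) - arcsin 0)) (𝓝[≠] 0) (𝓝 1) := by
    simpa using (hasDerivAt_arcsin (x := 0) (by norm_num) (by norm_num)).tendsto_slope_zero
  have hinv : Tendsto (fun x : ℝ => x⁻¹) atTop (𝓝[≠] 0) :=
    tendsto_inv_atTop_nhdsGT_zero.mono_right (nhdsGT_le_nhdsNE 0)
  refine ((hslope.comp hinv).div_const π).congr' ?_
  filter_upwards [eventually_ge_atTop 1] with x hx
  simp [U_eq_arcsin_div_pi hx, mul_comm, mul_div_assoc]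

lemma isLittleO_intervalIntegral_of_tendsto_zero {E : Type*} [NormedAddCommGroup E]
    [NormedSpace ℝ E] {g : ℝ → E} (hint : ∀ r ≥ 0, IntervalIntegrable g volume 0 r)
    (hg : Tendsto g atTop (𝓝 0)) : (fun r => ∫ t in (0:ℝ)..r, g t) =o[atTop] id := by
  refine isLittleO_iff.2 fun ε hε => ?_
  obtain ⟨R, hR⟩ : ∃ R, ∀ t ≥ R, 0 ≤ t ∧ ‖g t‖ ≤ ε / 2 := eventually_atTop.1 <|
    (eventually_ge_atTop 0).and <| hg.norm.eventually (ge_mem_nhds (by simpa using hε))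
  have hR₀ : 0 ≤ R := (hR R le_rfl).1
  filter_upwards [(isLittleO_const_id_atTop (∫ t in (0:ℝ)..R, g t)).def (half_pos hε),
    eventually_ge_atTop R] with r hconst hr
  have htail : ‖∫ t in R..r, g t‖ ≤ ε / 2 * |r - R| :=
    intervalIntegral.norm_integral_le_of_norm_le_const fun t ht =>
      (hR t (by rw [uIoc_of_le hr] at ht; exact ht.1.le)).2
  rw [← intervalIntegral.integral_add_adjacent_intervals (hint R hR₀)
    ((hint R hR₀).symm.trans (hint r (hR₀.trans hr)))]
  calc ‖(∫ t in (0:ℝ)..R, g t) + ∫ t in R..r, g t‖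
      ≤ ε / 2 * ‖id r‖ + ε / 2 * |r - R| := (norm_add_le _ _).trans (add_le_add hconst htail)
    _ ≤ ε * ‖id r‖ := by
      rw [id, norm_of_nonneg (hR₀.trans hr), abs_of_nonneg (sub_nonneg.2 hr)]
      nlinarith

lemma tendsto_intervalIntegral_div_atTop {f : ℝ → ℝ} {L : ℝ}
    (hint : ∀ r ≥ 0, IntervalIntegrable f volume 0 r) (hf : Tendsto f atTop (𝓝 L)) :
    Tendsto (fun r => (∫ t in (0:ℝ)..r, f t) / r) atTop (𝓝 L) := by
  have hint' : ∀ r ≥ 0, IntervalIntegrable (fun t => f t - L) volume 0 r :=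
    fun r hr => (hint r hr).sub intervalIntegrable_const
  have h := (isLittleO_intervalIntegral_of_tendsto_zero hint'
    (tendsto_sub_nhds_zero_iff.2 hf)).tendsto_div_nhds_zero
  rw [← zero_add L]
  refine (h.add_const L).congr' ?_
  filter_upwards [eventually_gt_atTop 0] with r hr
  rw [intervalIntegral.integral_sub (hint r hr.le) intervalIntegrable_const,
    intervalIntegral.integral_const, smul_eq_mul, id]
  field_simp
  ring

lemma integral_Ioi_one_rpow_neg {p : ℝ} (hp : 1 < p) :
    ∫ t in Ioi (1:ℝ), t ^ (-p) = 1 / (p - 1) := by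
  rw [integral_Ioi_rpow_of_lt (by linarith) one_pos, one_rpow, ← neg_sub, neg_add_eq_sub]
  field_simp

lemma ae_norm_comp_mul_mul_rpow_le {g : ℝ → ℝ} {C r : ℝ} (hg : ∀ x > 0, |g x| ≤ C) (hr : 0 < r)
    (p : ℝ) : ∀ᵐ t ∂(volume.restrict (Ioi (1:ℝ))), ‖g (t * r) * t ^ (-p)‖ ≤ C * t ^ (-p) := by
  refine (ae_restrict_iff' measurableSet_Ioi).2 (Eventually.of_forall fun t (ht : 1 < t) => ?_)
  have ht₀ : 0 < t := one_pos.trans ht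
  rw [norm_mul, norm_of_nonneg (rpow_pos_of_pos ht₀ _).le]
  exact mul_le_mul_of_nonneg_right (hg _ (mul_pos ht₀ hr)) (rpow_pos_of_pos ht₀ _).le

lemma abs_integral_comp_mul_mul_rpow_le {g : ℝ → ℝ} {C p r : ℝ} (hg : ∀ x > 0, |g x| ≤ C)
    (hp : 1 < p) (hr : 0 < r) : |∫ t in Ioi 1, g (t * r) * t ^ (-p)| ≤ C / (p - 1) :=
  calc |∫ t in Ioi 1, g (t * r) * t ^ (-p)|
      ≤ ∫ t in Ioi 1, C * t ^ (-p) :=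
        norm_integral_le_of_norm_le
          ((integrableOn_Ioi_rpow_of_lt (by linarith) one_pos).const_mul C)
          (ae_norm_comp_mul_mul_rpow_le hg hr p)
    _ = C / (p - 1) := by rw [integral_const_mul, integral_Ioi_one_rpow_neg hp, mul_one_div]

lemma tendsto_integral_comp_mul_mul_rpow_atTop {g : ℝ → ℝ} {C L p : ℝ} (hg_meas : Measurable g)
    (hg : ∀ x > 0, |g x| ≤ C) (hlim : Tendsto g atTop (𝓝 L)) (hp : 1 < p) :
    Tendsto (fun r => ∫ t in Ioi 1, g (t * r) * t ^ (-p)) atTop (𝓝 (L / (p - 1))) := by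
  rw [← mul_one_div, ← integral_Ioi_one_rpow_neg hp, ← integral_const_mul]
  refine tendsto_integral_filter_of_dominated_convergence (fun t => C * t ^ (-p))
    (Eventually.of_forall fun r => ((hg_meas.comp (measurable_id.mul_const r)).mul
      (measurable_id.pow_const _)).aestronglyMeasurable)
    ?_ ((integrableOn_Ioi_rpow_of_lt (by linarith) one_pos).const_mul C) ?_
  · filter_upwards [eventually_gt_atTop 0] with r hr
    exact ae_norm_comp_mul_mul_rpow_le hg hr p
  · refine (ae_restrict_iff' measurableSet_Ioi).2 (Eventually.of_forall fun t (ht : 1 < t) => ?_)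
    exact (hlim.comp (tendsto_id.const_mul_atTop (one_pos.trans ht))).mul_const _

lemma measurable_Ud (d : ℕ) : Measurable (Ud d) := by
  have h : StronglyMeasurable fun q : ℝ × ℝ => U (q.2 * q.1) * q.2 ^ ((1:ℝ) - d) :=
    ((measurable_U.comp (measurable_snd.mul measurable_fst)).mul
      (measurable_snd.pow_const _)).stronglyMeasurable
  exact measurable_U.sub (measurable_const.mul
    (h.integral_prod_right' (ν := volume.restrict (Ioi 1))).measurable)

lemma integral_U_mul_eq (d : ℕ) (r : ℝ) :
    (∫ t in Ioi 1, U (t * r) * t ^ ((1:ℝ) - d)) * r =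
      ∫ t in Ioi 1, U (t * r) * (t * r) * t ^ (-(d:ℝ)) := by
  rw [← integral_mul_const]
  refine setIntegral_congr_fun measurableSet_Ioi fun t (ht : 1 < t) => ?_
  rw [sub_eq_add_neg, rpow_add (one_pos.trans ht), rpow_one]
  ring

lemma Ud_mul_self_eq (d : ℕ) (r : ℝ) :
    Ud d r * r = U r * r - ((d:ℝ) - 2) * ∫ t in Ioi 1, U (t * r) * (t * r) * t ^ (-(d:ℝ)) := by
  rw [Ud, sub_mul, mul_assoc, integral_U_mul_eq d r]

lemma abs_Ud_mul_self_le_one {d : ℕ} (hd : 2 ≤ d) {r : ℝ} (hr : 0 < r) : |Ud d r * r| ≤ 1 := by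
  have hd' : (2:ℝ) ≤ d := by exact_mod_cast hd
  have hint := abs_integral_comp_mul_mul_rpow_le (g := fun x => U x * x)
    (fun x hx => abs_U_mul_self_le hx.le) (by linarith : (1:ℝ) < d) hr
  have hfrac : ((d:ℝ) - 2) * (1 / 2 / ((d:ℝ) - 1)) ≤ 1 / 2 := by
    rw [mul_div_assoc', div_le_iff₀ (by linarith)]
    nlinarith
  rw [Ud_mul_self_eq d r]
  calc |U r * r - ((d:ℝ) - 2) * ∫ t in Ioi 1, U (t * r) * (t * r) * t ^ (-(d:ℝ))|
      ≤ |U r * r| + ((d:ℝ) - 2) * |∫ t in Ioi 1, U (t * r) * (t * r) * t ^ (-(d:ℝ))| := by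
        refine (abs_sub (U r * r) _).trans_eq ?_
        rw [abs_mul ((d:ℝ) - 2), abs_of_nonneg (by linarith : (0:ℝ) ≤ (d:ℝ) - 2)]
    _ ≤ 1 / 2 + ((d:ℝ) - 2) * (1 / 2 / ((d:ℝ) - 1)) :=
        add_le_add (abs_U_mul_self_le hr.le) (mul_le_mul_of_nonneg_left hint (by linarith))
    _ ≤ 1 := by linarith

lemma intervalIntegrable_Ud_mul_self {d : ℕ} (hd : 2 ≤ d) {r : ℝ} (hr : 0 ≤ r) :
    IntervalIntegrable (fun t => Ud d t * t) volume 0 r := by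
  rw [intervalIntegrable_iff_integrableOn_Ioc_of_le hr]
  refine Integrable.mono' (g := fun _ => 1) (integrableOn_const measure_Ioc_lt_top.ne)
    ((measurable_Ud d).mul measurable_id).aestronglyMeasurable
    ((ae_restrict_iff' measurableSet_Ioc).2 (Eventually.of_forall fun t ht => ?_))
  exact abs_Ud_mul_self_le_one hd ht.1

lemma tendsto_Ud_mul_self_atTop {d : ℕ} (hd : 2 ≤ d) :
    Tendsto (fun r => Ud d r * r) atTop (𝓝 (1 / (((d:ℝ) - 1) * π))) := by
  have hd' : (2:ℝ) ≤ d := by exact_mod_cast hd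
  have hint := tendsto_integral_comp_mul_mul_rpow_atTop (g := fun x => U x * x)
    (measurable_U.mul measurable_id) (fun x hx => abs_U_mul_self_le hx.le)
    tendsto_U_mul_self_atTop (by linarith : (1:ℝ) < d)
  have hlim : 1 / π - ((d:ℝ) - 2) * (1 / π / ((d:ℝ) - 1)) = 1 / (((d:ℝ) - 1) * π) := by
    field_simp [(by linarith : (d:ℝ) - 1 ≠ 0)]
    ring
  rw [← hlim]
  exact (tendsto_U_mul_self_atTop.sub (hint.const_mul _)).congr
    fun r => (Ud_mul_self_eq d r).symm

theorem tendsto_rpow_mul_Wd_atTop (d : ℕ) (hd : 2 ≤ d) :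
    Tendsto (fun r : ℝ => r ^ ((d : ℝ) - 1) * Wd d r) atTop
      (nhds (2 / (Real.Gamma d * Real.pi * volSphere d))) := by
  have hd' : (2:ℝ) ≤ d := by exact_mod_cast hd
  set c := 2 / (Gamma ((d:ℝ) - 1) * volSphere d)
  have hΓ : Gamma (d:ℝ) = ((d:ℝ) - 1) * Gamma ((d:ℝ) - 1) := by
    rw [← Gamma_add_one (by linarith), sub_add_cancel]
  have hlim : c * (1 / (((d:ℝ) - 1) * π)) = 2 / (Gamma d * π * volSphere d) := by
    rw [hΓ, div_mul_div_comm, mul_one]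
    ring
  rw [← hlim]
  refine ((tendsto_intervalIntegral_div_atTop (fun r => intervalIntegrable_Ud_mul_self hd)
    (tendsto_Ud_mul_self_atTop hd)).const_mul c).congr' ?_
  filter_upwards [eventually_gt_atTop 0] with r hr
  have hpow : r ^ ((d:ℝ) - 1) * r ^ (-(d:ℝ)) = r⁻¹ := by
    rw [← rpow_add hr, ← rpow_neg_one]
    ring_nf
  rw [Wd, div_eq_mul_inv, ← hpow]
  ring
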